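/- Let κ be a cardinal number with uncountable cofinality and let X be any Banach space. Then the set 𝒮_{ℓ_1(κ)}(X) is σ-SOT closed in B(X): if (T_n) is a sequence in 𝒮_{ℓ_1(κ)}(X) which SOT-converges to some T ∈ B(X), then T ∈ 𝒮_{ℓ_1(κ)}(X). -/

import Mathlib

noncomputable section

open scoped ENNReal NNReal

/-- The space `ℓ_p(ι)` of `p`-summable real families indexed by `ι`, as a type.
For `p = ∞` this is the space of bounded families with the supremum norm. -/
abbrev ellp (ι : Type*) (p : ℝ≥0∞) : Type _ := lp (fun _ : ι => ℝ) p

/-- The standard unit vector `e_α` of `ℓ_p(ι)`. -/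
def stdVec (ι : Type*) (p : ℝ≥0∞) (α : ι) : ellp ι p :=
  letI := Classical.decEq ι
  lp.single p α 1

/-- `c₀(ι)`, realised as the submodule of `ℓ∞(ι)` consisting of those families `f` such
that `{i | ε ≤ |f i|}` is finite for every `ε > 0`; it carries the supremum norm. -/
def c0Submodule (ι : Type*) : Submodule ℝ (ellp ι ∞) where
  carrier := {f | ∀ ε : ℝ, 0 < ε → {i : ι | ε ≤ |f i|}.Finite}
  zero_mem' := by
    intro ε hε
    have h : {i : ι | ε ≤ |(0 : ellp ι ∞) i|} = ∅ := by
      ext i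
      simp [lp.coeFn_zero, (not_le.mpr hε)]
    rw [h]
    exact Set.finite_empty
  add_mem' := by
    intro f g hf hg ε hε
    have h2 : 0 < ε / 2 := by linarith
    refine ((hf _ h2).union (hg _ h2)).subset ?_
    intro i hi
    simp only [Set.mem_setOf_eq, lp.coeFn_add, Pi.add_apply] at hi
    by_contra hcon
    simp only [Set.mem_union, Set.mem_setOf_eq, not_or, not_le] at hcon
    have habs : |f i + g i| ≤ |f i| + |g i| := abs_add_le _ _
    linarith [hcon.1, hcon.2]
  smul_mem' := by
    intro c f hf ε hε
    rcases eq_or_ne c 0 with rfl | hc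
    · have h : {i : ι | ε ≤ |((0 : ℝ) • f) i|} = ∅ := by
        ext i
        simp [zero_smul, (not_le.mpr hε)]
      rw [h]
      exact Set.finite_empty
    · have hcpos : 0 < |c| := abs_pos.2 hc
      refine (hf (ε / |c|) (by positivity)).subset ?_
      intro i hi
      simp only [Set.mem_setOf_eq, lp.coeFn_smul, Pi.smul_apply, smul_eq_mul, abs_mul] at hi
      simp only [Set.mem_setOf_eq]
      rw [div_le_iff₀ hcpos]
      linarith [hi, mul_comm (|c|) (|f i|)]

/-- The Banach space `c₀(ι)` with the supremum norm. -/
abbrev c0Space (ι : Type*) : Type _ := ↥(c0Submodule ι)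

/-- `ℓ∞^c(ι)`: the submodule of `ℓ∞(ι)` of countably supported bounded families,
with the supremum norm. -/
def lInftyCSubmodule (ι : Type*) : Submodule ℝ (ellp ι ∞) where
  carrier := {f | {i : ι | f i ≠ 0}.Countable}
  zero_mem' := by
    have h : {i : ι | (0 : ellp ι ∞) i ≠ 0} = ∅ := by
      ext i
      simp [lp.coeFn_zero]
    rw [Set.mem_setOf_eq, h]
    exact Set.countable_empty
  add_mem' := by
    intro f g hf hg
    refine (hf.union hg).mono ?_
    intro i hi
    simp only [Set.mem_setOf_eq, lp.coeFn_add, Pi.add_apply] at hi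
    by_contra hcon
    simp only [Set.mem_union, Set.mem_setOf_eq, not_or, not_not] at hcon
    rw [hcon.1, hcon.2, add_zero] at hi
    exact hi rfl
  smul_mem' := by
    intro c f hf
    refine hf.mono ?_
    intro i hi
    simp only [Set.mem_setOf_eq, lp.coeFn_smul, Pi.smul_apply, smul_eq_mul] at hi
    simp only [Set.mem_setOf_eq]
    intro h
    rw [h, mul_zero] at hi
    exact hi rfl

/-- The Banach space `ℓ∞^c(ι)` with the supremum norm. -/
abbrev lInftyCSpace (ι : Type*) : Type _ := ↥(lInftyCSubmodule ι)

lemma stdVec_mem_c0 (ι : Type*) (α : ι) : stdVec ι ∞ α ∈ c0Submodule ι := by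
  letI := Classical.decEq ι
  intro ε hε
  refine (Set.finite_singleton α).subset ?_
  intro i hi
  simp only [Set.mem_setOf_eq] at hi
  simp only [Set.mem_singleton_iff]
  by_contra h
  rw [stdVec] at hi
  rw [lp.single_apply_ne _ _ _ h] at hi
  simp at hi
  linarith

lemma stdVec_mem_lInftyC (ι : Type*) (α : ι) : stdVec ι ∞ α ∈ lInftyCSubmodule ι := by
  letI := Classical.decEq ι
  refine (Set.countable_singleton α).mono ?_
  intro i hi
  simp only [Set.mem_setOf_eq] at hi
  simp only [Set.mem_singleton_iff]
  by_contra h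
  rw [stdVec, lp.single_apply_ne _ _ _ h] at hi
  exact hi rfl

/-- The standard unit vector `e_α` of `c₀(ι)`. -/
def c0Vec (ι : Type*) (α : ι) : c0Space ι := ⟨stdVec ι ∞ α, stdVec_mem_c0 ι α⟩

/-- The standard unit vector `e_α` of `ℓ∞^c(ι)`. -/
def lInftyCVec (ι : Type*) (α : ι) : lInftyCSpace ι := ⟨stdVec ι ∞ α, stdVec_mem_lInftyC ι α⟩

/-- `T` preserves an isomorphic copy of `Z`: there is a closed subspace `W` of `X`,
isomorphic to `Z`, on which `T` is bounded below. -/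
def PreservesCopy {X : Type*} [NormedAddCommGroup X] [NormedSpace ℝ X]
    (Z : Type*) [NormedAddCommGroup Z] [NormedSpace ℝ Z] (T : X →L[ℝ] X) : Prop :=
  ∃ W : Submodule ℝ X, IsClosed (W : Set X) ∧ Nonempty (W ≃L[ℝ] Z) ∧
    ∃ γ : ℝ, 0 < γ ∧ ∀ w ∈ W, γ * ‖w‖ ≤ ‖T w‖

/-- The set `𝒮_Z(X)` of `Z`-singular operators on `X`. -/
def SZ (Z : Type*) [NormedAddCommGroup Z] [NormedSpace ℝ Z]
    (X : Type*) [NormedAddCommGroup X] [NormedSpace ℝ X] : Set (X →L[ℝ] X) :=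
  {T | ¬ PreservesCopy Z T}

/-- A sequence of operators SOT-converges to `T₀` if it converges pointwise in norm. -/
def SOTConvergesTo {X : Type*} [NormedAddCommGroup X] [NormedSpace ℝ X]
    (T : ℕ → X →L[ℝ] X) (T₀ : X →L[ℝ] X) : Prop :=
  ∀ x : X, Filter.Tendsto (fun n => T n x) Filter.atTop (nhds (T₀ x))

/-- An M-basis `(b_j, f_j)_{j ∈ J}` for a Banach space `X`: a biorthogonal system which is
fundamental (the span of the `b_j` is dense) and total (the span of the `f_j` is
weak*-dense in the dual). -/
structure IsMBasis {X : Type*} [NormedAddCommGroup X] [NormedSpace ℝ X] {J : Type*}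
    (b : J → X) (f : J → X →L[ℝ] ℝ) : Prop where
  biorth_self : ∀ j, f j (b j) = 1
  biorth_ne : ∀ i j, i ≠ j → f j (b i) = 0
  fundamental : Dense (Submodule.span ℝ (Set.range b) : Set X)
  total : Dense ((Submodule.span ℝ (Set.range fun j => (f j : WeakDual ℝ X)) :
    Submodule ℝ (WeakDual ℝ X)) : Set (WeakDual ℝ X))

/-- A family `(x_α)` in `X` is equivalent to the standard unit vector basis of `ℓ_q(ι)`
(with `q` a real exponent). -/
def IsLpBasisEquiv {X ι : Type*} [NormedAddCommGroup X] [NormedSpace ℝ X]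
    (x : ι → X) (q : ℝ) : Prop :=
  ∃ c C : ℝ, 0 < c ∧ 0 < C ∧ ∀ a : ι →₀ ℝ,
    c * (∑ α ∈ a.support, |a α| ^ q) ^ (1 / q) ≤ ‖a.sum fun α r => r • x α‖ ∧
      ‖a.sum fun α r => r • x α‖ ≤ C * (∑ α ∈ a.support, |a α| ^ q) ^ (1 / q)

/-- A family `(x_α)` in `X` is equivalent to the standard unit vector basis of `c₀(ι)`. -/
def IsC0BasisEquiv {X ι : Type*} [NormedAddCommGroup X] [NormedSpace ℝ X]
    (x : ι → X) : Prop :=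
  ∃ c C : ℝ, 0 < c ∧ 0 < C ∧ ∀ a : ι →₀ ℝ,
    c * ((a.support.sup fun α => ‖a α‖₊) : ℝ≥0) ≤ ‖a.sum fun α r => r • x α‖ ∧
      ‖a.sum fun α r => r • x α‖ ≤ C * ((a.support.sup fun α => ‖a α‖₊) : ℝ≥0)

universe u v w x

/-! If `T₀` is bounded below on a copy `J(ℓ₁(κ))`, choose for every unit vector `e_α` an index
`n α` with `‖(T_{n α} - T₀) (J e_α)‖` small. As `cf κ > ω`, some fibre `{α | n α = k}` has
cardinality `κ`. On the copy of `ℓ₁(κ)` spanned by the `e_α` of that fibre, `T_k - T₀` has small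
norm, because the norm of an operator on `ℓ₁` is controlled by its values on the unit vectors;
hence `T_k` is still bounded below there. -/

open Function

theorem Cardinal.exists_injective_forall_eq_of_aleph0_lt_cof {ι : Type*}
    (hκ : Cardinal.aleph0 < (Cardinal.mk ι).ord.cof) (n : ι → ℕ) :
    ∃ k : ℕ, ∃ σ : ι → ι, Injective σ ∧ ∀ α, n (σ α) = k := by
  have hinf : Cardinal.aleph0 ≤ Cardinal.mk ι := hκ.le.trans (Ordinal.cof_ord_le _)
  obtain ⟨⟨k⟩, hk⟩ := Cardinal.infinite_pigeonhole (ULift.up ∘ n) hinf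
    (by rwa [Cardinal.mk_eq_aleph0])
  obtain ⟨σ⟩ := Cardinal.le_def _ _ |>.1 hk.ge
  exact ⟨k, Subtype.val ∘ σ, Subtype.val_injective.comp σ.injective,
    fun α => congrArg ULift.down (σ α).2⟩

section EllOne

variable {ι ι' : Type*}

lemma ellp_one_norm_eq_tsum (g : ellp ι 1) : ‖g‖ = ∑' i, ‖g i‖ := by
  simpa using lp.norm_eq_tsum_rpow (p := 1) (by norm_num) g

lemma ellp_one_summable_norm (g : ellp ι 1) : Summable fun i => ‖g i‖ := by
  simpa using (lp.memℓp g).summable (p := 1) (by norm_num)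

lemma ellp_one_norm_apply_le_of_forall_norm_single_le {E : Type*} [NormedAddCommGroup E]
    [NormedSpace ℝ E] [DecidableEq ι] (L : ellp ι 1 →L[ℝ] E) {C : ℝ}
    (h : ∀ i, ‖L (lp.single 1 i 1)‖ ≤ C) (g : ellp ι 1) : ‖L g‖ ≤ C * ‖g‖ := by
  have hL : HasSum (fun i => g i • L (lp.single 1 i 1)) (L g) := by
    convert (lp.hasSum_single ENNReal.one_ne_top g).map L L.continuous using 2 with i
    rw [comp_apply, ← map_smul, ← lp.single_smul, smul_eq_mul, mul_one]
  have hg : HasSum (fun i => C * ‖g i‖) (C * ‖g‖) := by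
    rw [ellp_one_norm_eq_tsum]
    exact (ellp_one_summable_norm g).hasSum.mul_left C
  refine hL.norm_le_of_bounded hg fun i => ?_
  rw [norm_smul, mul_comm]
  gcongr
  exact h i

variable {σ : ι → ι'}

lemma norm_extend_zero_apply {E : Type*} [NormedAddCommGroup E] (f : ι → E) (j : ι') :
    ‖extend σ f 0 j‖ = extend σ (fun i => ‖f i‖) 0 j := by
  simp only [apply_extend norm, comp_def, Pi.zero_apply, norm_zero]
  rfl

lemma memℓp_one_extend_zero (hσ : Injective σ) (g : ellp ι 1) : Memℓp (extend σ g 0) 1 := by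
  refine memℓp_gen ?_
  simp only [ENNReal.toReal_one, Real.rpow_one, norm_extend_zero_apply]
  exact (summable_extend_zero hσ).2 (ellp_one_summable_norm g)

def ellpOneExtendZero (hσ : Injective σ) : ellp ι 1 →ₗᵢ[ℝ] ellp ι' 1 where
  toFun g := ⟨extend σ g 0, memℓp_one_extend_zero hσ g⟩
  map_add' g g' := lp.ext <| by
    show extend σ ⇑(g + g') 0 = extend σ ⇑g 0 + extend σ ⇑g' 0
    rw [lp.coeFn_add, ← extend_add, add_zero]
  map_smul' c g := lp.ext <| by
    show extend σ ⇑(c • g) 0 = c • extend σ ⇑g 0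
    rw [lp.coeFn_smul, ← extend_smul, smul_zero]
  norm_map' g := by
    show ‖(⟨extend σ g 0, _⟩ : ellp ι' 1)‖ = ‖g‖
    rw [ellp_one_norm_eq_tsum, ellp_one_norm_eq_tsum]
    simp only [norm_extend_zero_apply]
    exact tsum_extend_zero hσ _

lemma ellpOneExtendZero_single [DecidableEq ι] [DecidableEq ι'] (hσ : Injective σ) (i : ι)
    (r : ℝ) : ellpOneExtendZero hσ (lp.single 1 i r) = lp.single 1 (σ i) r := by
  ext j
  show extend σ (Pi.single i r) 0 j = (Pi.single (σ i) r : ι' → ℝ) j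
  by_cases hj : ∃ a, σ a = j
  · obtain ⟨a, rfl⟩ := hj
    simp only [hσ.extend_apply, Pi.single_apply, hσ.eq_iff]
  · rw [extend_apply' _ _ _ hj, Pi.single_eq_of_ne (fun h => hj ⟨i, h.symm⟩)]
    rfl

end EllOne

/-- The `+ 1` spares a case split on `‖L‖ = 0`. -/
lemma ContinuousLinearMap.div_opNorm_add_one_mul_norm_apply_le {E F : Type*}
    [NormedAddCommGroup E] [NormedSpace ℝ E] [NormedAddCommGroup F] [NormedSpace ℝ F]
    (L : E →L[ℝ] F) {c r : ℝ} (hc : 0 ≤ c) {x : E} (h : c * ‖x‖ ≤ r) :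
    c / (‖L‖ + 1) * ‖L x‖ ≤ r :=
  calc c / (‖L‖ + 1) * ‖L x‖ ≤ c / (‖L‖ + 1) * ((‖L‖ + 1) * ‖x‖) := by
        gcongr
        exact L.le_opNorm x |>.trans (by gcongr; linarith)
    _ = c * ‖x‖ := by field_simp
    _ ≤ r := h

theorem preservesCopy_iff_exists_mul_norm_le_norm_apply {X Z : Type*} [NormedAddCommGroup X]
    [NormedSpace ℝ X] [CompleteSpace X] [NormedAddCommGroup Z] [NormedSpace ℝ Z]
    [CompleteSpace Z] (T : X →L[ℝ] X) :
    PreservesCopy Z T ↔ ∃ J : Z →L[ℝ] X, ∃ c : ℝ, 0 < c ∧ ∀ z, c * ‖z‖ ≤ ‖T (J z)‖ := by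
  constructor
  · rintro ⟨W, -, ⟨φ⟩, γ, hγ, hT⟩
    refine ⟨W.subtypeL ∘L (φ.symm : Z →L[ℝ] W), γ / (‖(φ : W →L[ℝ] Z)‖ + 1), by positivity,
      fun z => ?_⟩
    simpa using (φ : W →L[ℝ] Z).div_opNorm_add_one_mul_norm_apply_le hγ.le (hT _ (φ.symm z).2)
  · rintro ⟨J, c, hc, hJ⟩
    have hJanti : AntilipschitzWith ⟨‖T‖ / c, by positivity⟩ J :=
      J.antilipschitz_of_bound fun z => by
        show ‖z‖ ≤ ‖T‖ / c * ‖J z‖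
        rw [div_mul_eq_mul_div, le_div_iff₀ hc]
        linarith [T.le_opNorm (J z), hJ z]
    have hclosed : IsClosed (Set.range J) := hJanti.isClosed_range J.uniformContinuous
    refine ⟨LinearMap.range (J : Z →ₗ[ℝ] X), hclosed,
      ⟨(J.equivRange hJanti.injective hclosed).symm⟩, c / (‖J‖ + 1), by positivity, ?_⟩
    rintro _ ⟨z, rfl⟩
    exact J.div_opNorm_add_one_mul_norm_apply_le hc.le (hJ z)

/-- For a cardinal `κ` of uncountable cofinality and any Banach space `X`,
`𝒮_{ℓ_1(κ)}(X)` is σ-SOT closed. -/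
theorem sz_ell1_sigmaSOTClosed {X : Type u} [NormedAddCommGroup X] [NormedSpace ℝ X]
    [CompleteSpace X] {ικ : Type v}
    (hκ : Cardinal.aleph0 < (Cardinal.mk ικ).ord.cof)
    (T : ℕ → X →L[ℝ] X) (hT : ∀ n, T n ∈ SZ (ellp ικ 1) X)
    (T₀ : X →L[ℝ] X) (hconv : SOTConvergesTo T T₀) :
    T₀ ∈ SZ (ellp ικ 1) X := by
  classical
  intro hT₀
  obtain ⟨J, c, hc, hJ⟩ := (preservesCopy_iff_exists_mul_norm_le_norm_apply T₀).1 hT₀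
  have hclose : ∀ α, ∃ m, ‖(T m - T₀) (J (lp.single 1 α 1))‖ < c / 2 := fun α =>
    ((hconv _).eventually (Metric.ball_mem_nhds _ (half_pos hc))).exists.imp fun _ hm =>
      mem_ball_iff_norm.1 hm
  choose n hn using hclose
  obtain ⟨k, σ, hσ, hk⟩ := Cardinal.exists_injective_forall_eq_of_aleph0_lt_cof hκ n
  set J' := J ∘L (ellpOneExtendZero hσ).toContinuousLinearMap
  have hsmall : ∀ g, ‖T k (J' g) - T₀ (J' g)‖ ≤ c / 2 * ‖g‖ :=
    ellp_one_norm_apply_le_of_forall_norm_single_le ((T k - T₀) ∘L J') fun β => by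
      simpa [J', ellpOneExtendZero_single, hk β] using (hn (σ β)).le
  refine hT k ((preservesCopy_iff_exists_mul_norm_le_norm_apply (T k)).2
    ⟨J', c / 2, by positivity, fun g => ?_⟩)
  have hT₀J' : c * ‖g‖ ≤ ‖T₀ (J' g)‖ := by
    simpa only [J', ContinuousLinearMap.comp_apply, LinearIsometry.coe_toContinuousLinearMap,
      LinearIsometry.norm_map] using hJ (ellpOneExtendZero hσ g)
  linarith [hsmall g, norm_le_norm_add_norm_sub (T k (J' g)) (T₀ (J' g))]
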